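/- arXiv:1404.7739 — 6 statements merged into one kernel-verified Lean document; each statement's English description precedes it below -/
import Mathlib

section
/- Let V be a k-dimensional F_q-subspace of F_{q^n} with subspace polynomial P_V(x) = x^{q^k} + sum_{j=0}^i alpha_j x^{q^j}. If alpha_s != 0 for some s in {1,...,i} and gcd(s,n) = t, then for all alpha, beta in F_{q^n}^* with alpha/beta not in F_{q^t}, we have alpha V != beta V. Consequently V has at least (q^n - 1)/(q^t - 1) distinct cyclic shifts. -/
/-!
If `γ = α / β` stabilises `V`, then `P_V(γ x) = γ ^ |V| * P_V(x)`, so `γ ^ m = γ ^ |V|` for every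
exponent `m` at which `P_V` has a nonzero coefficient. Taking `m = 1` (nonzero because `0` is a simple
root) and `m = q ^ s` gives `γ ^ q ^ s = γ`; with `γ ^ q ^ n = γ` this yields `γ ^ q ^ gcd(s, n) = γ`.
So the stabiliser of `V` in `Fˣ` consists of `(q ^ t - 1)`-th roots of unity, and orbit–stabiliser
bounds the number of shifts.
-/

open Pointwise

open Polynomial

noncomputable def subspacePoly {F : Type*} [Field F] [Fintype F] (V : Set F) : F[X] :=
  ∏ v ∈ V.toFinite.toFinset, (X - C v)

section SubspacePoly

variable {F : Type*} [Field F] [Fintype F]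

theorem subspacePoly_smul_comp_C_mul_X (S : Set F) {α : F} (hα : α ≠ 0) :
    (subspacePoly (α • S)).comp (C α * X) =
      C α ^ S.toFinite.toFinset.card * subspacePoly S := by
  classical
  have himage : (α • S).toFinite.toFinset = S.toFinite.toFinset.image (α * ·) := by
    ext x
    simp only [Set.Finite.mem_toFinset, Set.mem_smul_set, Finset.mem_image, smul_eq_mul]
  rw [subspacePoly, subspacePoly, himage,
    Finset.prod_image fun x _ y _ hxy => mul_left_cancel₀ hα hxy, prod_comp,
    ← Finset.prod_const, ← Finset.prod_mul_distrib]
  refine Finset.prod_congr rfl fun v _ => ?_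
  rw [sub_comp, X_comp, C_comp, mul_sub, C_mul]

theorem pow_eq_pow_of_smul_eq_of_coeff_ne_zero {S : Set F} {γ : F} (hγ : γ ≠ 0)
    (hS : γ • S = S) {m m' : ℕ} (hm : (subspacePoly S).coeff m ≠ 0)
    (hm' : (subspacePoly S).coeff m' ≠ 0) : γ ^ m = γ ^ m' := by
  have key : ∀ l, (subspacePoly S).coeff l ≠ 0 → γ ^ l = γ ^ S.toFinite.toFinset.card := by
    intro l hl
    have h := congrArg (coeff · l) (subspacePoly_smul_comp_C_mul_X S hγ)
    simp only [hS, comp_C_mul_X_coeff, ← C_pow, coeff_C_mul] at h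
    exact mul_left_cancel₀ hl (h.trans (mul_comm _ _))
  rw [key m hm, key m' hm']

theorem subspacePoly_coeff_one_ne_zero {S : Set F} (hS : (0 : F) ∈ S) :
    (subspacePoly S).coeff 1 ≠ 0 := by
  classical
  rw [subspacePoly, ← Finset.mul_prod_erase _ _ (S.toFinite.mem_toFinset.mpr hS), C_0,
    sub_zero, ← zero_add 1, coeff_X_mul, coeff_zero_eq_eval_zero, eval_prod,
    Finset.prod_ne_zero_iff]
  intro v hv
  simpa using (Finset.mem_erase.mp hv).1

end SubspacePoly

theorem pow_pow_gcd_eq_self {M : Type*} [Monoid M] {x : M} {q a b : ℕ}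
    (ha : x ^ q ^ a = x) (hb : x ^ q ^ b = x) : x ^ q ^ a.gcd b = x := by
  have hperiodic (c : ℕ) : Function.IsPeriodicPt (· ^ q) c x ↔ x ^ q ^ c = x := by
    rw [Function.IsPeriodicPt, Function.IsFixedPt, pow_iterate]
  exact (hperiodic _).mp (((hperiodic a).mpr ha).gcd ((hperiodic b).mpr hb))

theorem coeff_X_pow_pow_add_sum_C_mul_X_pow_pow {R : Type*} [Semiring R] {q k i m : ℕ}
    (hq : 2 ≤ q) (a : ℕ → R) (hmi : m ≤ i) (hik : i < k) :
    (X ^ q ^ k + ∑ j ∈ Finset.range (i + 1), C (a j) * X ^ q ^ j).coeff (q ^ m) = a m := by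
  have hinj := Nat.pow_right_injective hq
  have hmk : m ≠ k := by omega
  simp [coeff_X_pow, finsetSum_coeff, hinj.eq_iff, hmi, hmk]

theorem div_le_ncard_smul_orbit {F : Type*} [Field F] [Fintype F] (S : Set F) {r : ℕ}
    (h : ∀ γ : F, γ ≠ 0 → γ • S = S → γ ^ r = 1) :
    (Fintype.card F - 1) / r ≤ {W | ∃ α : F, α ≠ 0 ∧ W = α • S}.ncard := by
  rcases r.eq_zero_or_pos with rfl | hr
  · simp
  have horbit : {W | ∃ α : F, α ≠ 0 ∧ W = α • S} = MulAction.orbit Fˣ S := by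
    ext W
    constructor
    · rintro ⟨α, hα, rfl⟩
      exact ⟨Units.mk0 α hα, rfl⟩
    · rintro ⟨u, rfl⟩
      exact ⟨u, u.ne_zero, rfl⟩
  have hstab : MulAction.stabilizer Fˣ S ≤ rootsOfUnity r F := fun u hu => by
    rw [mem_rootsOfUnity, Units.ext_iff, Units.val_pow_eq_pow_val]
    exact h u u.ne_zero hu
  have : NeZero r := ⟨hr.ne'⟩
  have hstab_card : Nat.card (MulAction.stabilizer Fˣ S) ≤ r :=
    (Subgroup.card_le_of_le hstab).trans (card_rootsOfUnity F r)
  rw [horbit, ← MulAction.index_stabilizer, ← Nat.card_eq_fintype_card, ← Nat.card_units,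
    ← (MulAction.stabilizer Fˣ S).card_mul_index]
  exact Nat.div_le_of_le_mul (Nat.mul_le_mul_right _ hstab_card)

theorem stmt7_general (q n k i s t : ℕ)
    (Fq F : Type*) [Field Fq] [Fintype Fq] [Field F] [Fintype F] [Algebra Fq F]
    (hq : Fintype.card Fq = q) (hn : Module.finrank Fq F = n)
    (V : Submodule Fq F)
    (hi : i < k) (a : ℕ → F)
    (hP : subspacePoly (V : Set F) =
      X ^ q ^ k + ∑ j ∈ Finset.range (i + 1), C (a j) * X ^ q ^ j)
    (hsi : s ≤ i) (has : a s ≠ 0) (ht : Nat.gcd s n = t) :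
    (∀ α β : F, α ≠ 0 → β ≠ 0 → (α / β) ^ q ^ t ≠ α / β →
      α • (V : Set F) ≠ β • (V : Set F)) ∧
    (q ^ n - 1) / (q ^ t - 1) ≤
      Set.ncard {W : Set F | ∃ α : F, α ≠ 0 ∧ W = α • (V : Set F)} := by
  have hq2 : 2 ≤ q := hq ▸ Fintype.one_lt_card
  have hcard : Fintype.card F = q ^ n := hq ▸ hn ▸ Module.card_eq_pow_finrank
  have hcoeff (j : ℕ) (hj : j ≤ i) : (subspacePoly (V : Set F)).coeff (q ^ j) = a j :=
    hP ▸ coeff_X_pow_pow_add_sum_C_mul_X_pow_pow hq2 a hj hi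
  have hfix (γ : F) (hγ : γ ≠ 0) (hV : γ • (V : Set F) = V) : γ ^ q ^ t = γ := by
    have hs : γ ^ q ^ s = γ ^ 1 := pow_eq_pow_of_smul_eq_of_coeff_ne_zero hγ hV
      (hcoeff s hsi ▸ has) (subspacePoly_coeff_one_ne_zero V.zero_mem)
    have hn : γ ^ q ^ n = γ := hcard ▸ FiniteField.pow_card γ
    exact ht ▸ pow_pow_gcd_eq_self (hs.trans (pow_one γ)) hn
  refine ⟨fun α β hα hβ hne hαβ => hne (hfix _ (div_ne_zero hα hβ) ?_), ?_⟩
  · rw [div_eq_inv_mul, mul_smul, hαβ, inv_smul_smul₀ hβ]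
  · refine hcard ▸ div_le_ncard_smul_orbit _ fun γ hγ hV => ?_
    rw [pow_sub₀ γ hγ (Nat.one_le_pow _ _ (by omega)), hfix γ hγ hV, pow_one, mul_inv_cancel₀ hγ]

theorem stmt7 (q n k i s t : ℕ)
    (Fq F : Type*) [Field Fq] [Fintype Fq] [Field F] [Fintype F] [Algebra Fq F]
    (hq : Fintype.card Fq = q) (hn : Module.finrank Fq F = n)
    (V : Submodule Fq F) (hk : Module.finrank Fq V = k)
    (hi : i < k) (a : ℕ → F)
    (hP : subspacePoly (V : Set F) =
      X ^ q ^ k + ∑ j ∈ Finset.range (i + 1), C (a j) * X ^ q ^ j)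
    (hs1 : 1 ≤ s) (hsi : s ≤ i) (has : a s ≠ 0) (ht : Nat.gcd s n = t) :
    (∀ α β : F, α ≠ 0 → β ≠ 0 → (α / β) ^ q ^ t ≠ α / β →
      α • (V : Set F) ≠ β • (V : Set F)) ∧
    (q ^ n - 1) / (q ^ t - 1) ≤
      Set.ncard {W : Set F | ∃ α : F, α ≠ 0 ∧ W = α • (V : Set F)} :=
  stmt7_general q n k i s t Fq F hq hn V hi a hP hsi has ht
end

section
/- If the polynomial x^{q^k - 1} + x^{q-1} + 1 is irreducible over F_q and q^k - 1 divides n, then x^{q^k} + x^q + x divides x^{q^n} - x, i.e., it is a subspace polynomial with respect to F_{q^n}. -/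
/-!
Write `f = X ^ (q ^ k - 1) + X ^ (q - 1) + 1`, so that `X ^ q ^ k + X ^ q + X = X * f`.
Being irreducible of degree `q ^ k - 1 ∣ n`, `f` divides `X ^ q ^ n - X`; so does `X`,
and `X` is coprime to `f` because `f(0) = 1`.
-/

open Polynomial

section Trinomial

variable {R : Type*} {a b : ℕ}

theorem natDegree_X_pow_add_X_pow_add_one [Semiring R] [Nontrivial R] (hba : b < a) :
    (X ^ a + X ^ b + 1 : R[X]).natDegree = a := by
  rw [← C_1, natDegree_add_C, natDegree_add_eq_left_of_natDegree_lt] <;> simp [hba]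

theorem Irreducible.natDegree_X_pow_add_X_pow_add_one [Semiring R] (hba : b ≤ a)
    (h : Irreducible (X ^ a + X ^ b + 1 : R[X])) : (X ^ a + X ^ b + 1 : R[X]).natDegree = a := by
  have : Nontrivial R := by
    by_contra! hR
    exact h.not_isUnit (isUnit_of_subsingleton _)
  rcases hba.lt_or_eq with hlt | rfl
  · exact _root_.natDegree_X_pow_add_X_pow_add_one hlt
  have hsum : (X ^ b + X ^ b + 1 : R[X]) = C 2 * X ^ b + C 1 := by
    rw [C_1, ← two_mul, map_ofNat]
  have h2 : (2 : R) ≠ 0 := fun h2 ↦ h.not_isUnit (by simp [hsum, h2])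
  rw [hsum, natDegree_add_C, natDegree_C_mul_X_pow _ _ h2]

theorem X_pow_add_X_pow_add_X_eq_X_mul [Semiring R] (ha : a ≠ 0) (hb : b ≠ 0) :
    (X ^ a + X ^ b + X : R[X]) = X * (X ^ (a - 1) + X ^ (b - 1) + 1) := by
  obtain ⟨a, rfl⟩ := Nat.exists_eq_add_one_of_ne_zero ha
  obtain ⟨b, rfl⟩ := Nat.exists_eq_add_one_of_ne_zero hb
  simp only [Nat.add_sub_cancel, pow_succ', mul_add, mul_one]

theorem isCoprime_X_X_pow_add_X_pow_add_one [Field R] (ha : a ≠ 0) (hb : b ≠ 0) :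
    IsCoprime X (X ^ a + X ^ b + 1 : R[X]) := by
  rw [irreducible_X.coprime_iff_not_dvd, X_dvd_iff]
  simp [coeff_X_pow, ha.symm, hb.symm]

end Trinomial

theorem stmt9 (q n k : ℕ) (hk : 0 < k)
    (Fq : Type*) [Field Fq] [Fintype Fq] (hq : Fintype.card Fq = q)
    (hirr : Irreducible (X ^ (q ^ k - 1) + X ^ (q - 1) + 1 : Fq[X]))
    (hdvd : (q ^ k - 1) ∣ n) :
    (X ^ q ^ k + X ^ q + X : Fq[X]) ∣ (X ^ q ^ n - X) := by
  have hq1 : 1 < q := hq ▸ Fintype.one_lt_card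
  have hqk : q ≤ q ^ k := Nat.le_self_pow hk.ne' q
  have hq0 : q ^ k ≠ 0 := by positivity
  have hf := hirr.natDegree_dvd_iff_dvd_X_pow_card_pow_sub_X (n := n) |>.mp
    (by rwa [hirr.natDegree_X_pow_add_X_pow_add_one (by omega)])
  rw [Nat.card_eq_fintype_card, hq] at hf
  have hX : (X : Fq[X]) ∣ X ^ q ^ n - X := dvd_sub (dvd_pow_self X (by positivity)) dvd_rfl
  rw [X_pow_add_X_pow_add_X_eq_X_mul hq0 (by omega)]
  exact (isCoprime_X_X_pow_add_X_pow_add_one (by omega) (by omega)).mul_dvd hX hf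
end

section
/- Suppose q^k - 1 divides n, x^{q^k-1} + x^{q-1} + 1 is irreducible over F_q, and V is the k-dimensional subspace of F_{q^n} whose subspace polynomial is x^{q^k} + x^q + x. Then the orbit code C = {alpha V : alpha in F_{q^n}^*} has exactly (q^n-1)/(q-1) codewords and any two distinct codewords U, W in C satisfy dim(U ∩ W) <= 1, i.e., minimum subspace distance at least 2k - 2. -/
/-!
Every element of `V` is a root of `L(x) = x ^ q ^ k + x ^ q + x`. If `u` and `γ u` are both roots,
then `γ ^ q ^ k L(u) - L(γ u) = 0` reads `(γ ^ q - γ ^ q ^ k) u ^ q = (γ ^ q ^ k - γ) u`. When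
`γ ^ q ≠ γ ^ q ^ k` the solutions `u` form a single `𝔽_q`-line, so if two independent `u` satisfy
it then `γ ^ q = γ ^ q ^ k = γ`, i.e. `γ ∈ 𝔽_q`. Taking the pair `v, γ v` shows that the stabilizer
of `V` in `𝔽_{q^n}ˣ` is `𝔽_qˣ`, which gives the number of codewords by orbit–stabilizer; taking a
pair in `V ∩ γ V` shows that `dim (αV ∩ βV) ≥ 2` forces `β / α ∈ 𝔽_q`, i.e. `αV = βV`.
-/

open Pointwise Polynomial

theorem isRoot_subspacePoly {F : Type*} [Field F] [Fintype F] {V : Set F} {v : F} (hv : v ∈ V) :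
    (subspacePoly V).IsRoot v := by
  rw [subspacePoly, IsRoot, eval_prod]
  exact Finset.prod_eq_zero (V.toFinite.mem_toFinset.mpr hv) (by simp)

theorem Submodule.exists_mem_notMem_span_singleton {K M : Type*} [DivisionRing K] [AddCommGroup M]
    [Module K M] {P : Submodule K M} (hP : 1 < Module.finrank K P) (y : M) :
    ∃ x ∈ P, x ∉ K ∙ y := by
  by_contra! h
  have := Submodule.finrank_mono (show P ≤ K ∙ y from h)
  have := finrank_span_le_card (R := K) ({y} : Set M)
  simp only [Set.toFinset_singleton, Finset.card_singleton] at this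
  omega

theorem setOf_smul_eq_orbit_units {K R M : Type*} [Field K] [Ring R] [AddCommGroup M]
    [Module K M] [Module R M] [SMulCommClass K R M] (V : Submodule R M) :
    {W : Submodule R M | ∃ α : K, α ≠ 0 ∧ (W : Set M) = α • (V : Set M)} =
      MulAction.orbit Kˣ V := by
  ext W
  constructor
  · rintro ⟨α, hα, hW⟩
    exact ⟨Units.mk0 α hα, SetLike.coe_injective hW.symm⟩
  · rintro ⟨a, rfl⟩
    exact ⟨a, a.ne_zero, rfl⟩

theorem finrank_smul_inf_smul {G R M : Type*} [Group G] [Ring R] [AddCommGroup M] [Module R M]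
    [DistribMulAction G M] [SMulCommClass G R M] (V : Submodule R M) (a b : G) :
    Module.finrank R ↥(a • V ⊓ b • V) = Module.finrank R ↥(V ⊓ (a⁻¹ * b) • V) := by
  have hinf : a • V ⊓ b • V = a • (V ⊓ (a⁻¹ * b) • V) := by
    apply SetLike.coe_injective
    simp only [Submodule.coe_inf, Submodule.coe_pointwise_smul, Set.smul_set_inter, smul_smul,
      mul_inv_cancel_left]
  rw [hinf]
  exact (DistribMulAction.toLinearEquiv R M a).finrank_map_eq _

section

variable {Fq F : Type*} [Field Fq] [Field F] [Algebra Fq F]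

theorem algebraMap_smul_submodule_eq_self {s : Fq} (hs : s ≠ 0) (V : Submodule Fq F) :
    algebraMap Fq F s • V = V := by
  ext x
  rw [Submodule.mem_smul_pointwise_iff_exists]
  refine ⟨?_, fun hx => ⟨s⁻¹ • x, V.smul_mem _ hx, ?_⟩⟩
  · rintro ⟨y, hy, rfl⟩
    rw [algebraMap_smul]
    exact V.smul_mem s hy
  · rw [algebraMap_smul, smul_smul, mul_inv_cancel₀ hs, one_smul]

variable [Fintype Fq]

theorem mem_range_algebraMap_of_pow_card_eq_self {γ : F} (h : γ ^ Fintype.card Fq = γ) :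
    γ ∈ (algebraMap Fq F).range := by
  have hq : 1 < Fintype.card Fq := Fintype.one_lt_card
  have hroots : (X ^ Fintype.card Fq - X : F[X]).roots =
      (X ^ Fintype.card Fq - X : Fq[X]).roots.map (algebraMap Fq F) := by
    rw [roots_map_of_injective_of_card_eq_natDegree (algebraMap Fq F).injective]
    · simp
    · rw [FiniteField.roots_X_pow_card_sub_X, FiniteField.X_pow_card_sub_X_natDegree_eq _ hq]
      rfl
  have hγ : γ ∈ (X ^ Fintype.card Fq - X : F[X]).roots := by
    rw [mem_roots (FiniteField.X_pow_card_sub_X_ne_zero F hq)]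
    simp [h]
  rw [hroots, Multiset.mem_map] at hγ
  obtain ⟨s, -, hs⟩ := hγ
  exact ⟨s, hs⟩

variable {q : ℕ}

theorem mem_span_singleton_of_mul_pow_card_eq (hq : Fintype.card Fq = q) {a b u v : F}
    (ha : a ≠ 0) (hv : v ≠ 0)
    (hu : a * u ^ q = b * u) (hv' : a * v ^ q = b * v) : u ∈ Fq ∙ v := by
  have hfix : (u / v) ^ Fintype.card Fq = u / v := by
    rw [hq, div_pow, div_eq_div_iff (pow_ne_zero _ hv) hv]
    apply mul_left_cancel₀ ha
    linear_combination v * hu - u * hv'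
  obtain ⟨s, hs⟩ := mem_range_algebraMap_of_pow_card_eq_self hfix
  exact Submodule.mem_span_singleton.mpr ⟨s, by rw [Algebra.smul_def, hs, div_mul_cancel₀ _ hv]⟩

theorem mem_range_algebraMap_or_mem_span_singleton (hq : Fintype.card Fq = q) {k : ℕ} {γ u v : F}
    (hu : u ^ q ^ k + u ^ q + u = 0) (hv : v ^ q ^ k + v ^ q + v = 0)
    (hγu : (γ * u) ^ q ^ k + (γ * u) ^ q + γ * u = 0)
    (hγv : (γ * v) ^ q ^ k + (γ * v) ^ q + γ * v = 0) (hv0 : v ≠ 0) :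
    γ ∈ (algebraMap Fq F).range ∨ u ∈ Fq ∙ v := by
  have eu : (γ ^ q - γ ^ q ^ k) * u ^ q = (γ ^ q ^ k - γ) * u := by
    linear_combination hγu - γ ^ q ^ k * hu
  have ev : (γ ^ q - γ ^ q ^ k) * v ^ q = (γ ^ q ^ k - γ) * v := by
    linear_combination hγv - γ ^ q ^ k * hv
  by_cases ha : γ ^ q - γ ^ q ^ k = 0
  · left
    have hb : γ ^ q ^ k - γ = 0 := by
      simpa [ha, hv0] using ev.symm
    exact mem_range_algebraMap_of_pow_card_eq_self (by rw [hq]; linear_combination ha + hb)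
  · exact Or.inr (mem_span_singleton_of_mul_pow_card_eq hq ha hv0 eu ev)

variable {k : ℕ} {V : Submodule Fq F}

theorem mem_range_algebraMap_of_smul_eq_self (hq : Fintype.card Fq = q)
    (hV : ∀ v ∈ V, v ^ q ^ k + v ^ q + v = 0) (hV0 : V ≠ ⊥) {δ : F} (hδ : δ • V = V) :
    δ ∈ (algebraMap Fq F).range := by
  have hmul : ∀ x ∈ V, δ * x ∈ V := fun x hx => by
    simpa [hδ] using Submodule.smul_mem_pointwise_smul x δ V hx
  obtain ⟨v, hv, hv0⟩ := Submodule.exists_mem_ne_zero_of_ne_bot hV0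
  have hδv := hmul v hv
  obtain hδ | hδv' := mem_range_algebraMap_or_mem_span_singleton hq (hV _ hδv) (hV v hv)
    (hV _ (hmul _ hδv)) (hV _ hδv) hv0
  · exact hδ
  · obtain ⟨s, hs⟩ := Submodule.mem_span_singleton.mp hδv'
    rw [Algebra.smul_def] at hs
    exact ⟨s, mul_right_cancel₀ hv0 hs⟩

theorem units_mem_stabilizer_iff (hq : Fintype.card Fq = q)
    (hV : ∀ v ∈ V, v ^ q ^ k + v ^ q + v = 0) (hV0 : V ≠ ⊥) {a : Fˣ} :
    a ∈ MulAction.stabilizer Fˣ V ↔ (a : F) ∈ (algebraMap Fq F).range := by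
  refine ⟨mem_range_algebraMap_of_smul_eq_self hq hV hV0, ?_⟩
  rintro ⟨s, hs⟩
  have hs0 : s ≠ 0 := by rintro rfl; exact a.ne_zero (by simpa using hs.symm)
  rw [MulAction.mem_stabilizer_iff, Units.smul_def, ← hs]
  exact algebraMap_smul_submodule_eq_self hs0 V

theorem card_stabilizer_units (hq : Fintype.card Fq = q)
    (hV : ∀ v ∈ V, v ^ q ^ k + v ^ q + v = 0) (hV0 : V ≠ ⊥) :
    Nat.card (MulAction.stabilizer Fˣ V) = q - 1 := by
  have hrange : MulAction.stabilizer Fˣ V = (Units.map (algebraMap Fq F : Fq →* F)).range := by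
    ext a
    rw [units_mem_stabilizer_iff hq hV hV0, MonoidHom.mem_range, RingHom.mem_range]
    exact ⟨fun ⟨s, hs⟩ => ⟨Units.mk0 s (by rintro rfl; exact a.ne_zero (by simpa using hs.symm)),
      Units.ext hs⟩, fun ⟨s, hs⟩ => ⟨s, congrArg Units.val hs⟩⟩
  rw [hrange, ← Nat.card_congr (MonoidHom.ofInjective
    (Units.map_injective (f := (algebraMap Fq F : Fq →* F)) (algebraMap Fq F).injective)).toEquiv,
    Nat.card_units, Nat.card_eq_fintype_card, hq]

theorem mem_range_algebraMap_of_one_lt_finrank_inf [Finite F] (hq : Fintype.card Fq = q)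
    (hV : ∀ v ∈ V, v ^ q ^ k + v ^ q + v = 0) {δ : F}
    (h : 1 < Module.finrank Fq ↥(V ⊓ δ • V)) : δ ∈ (algebraMap Fq F).range := by
  have hne : V ⊓ δ • V ≠ ⊥ := by
    rintro hbot
    rw [hbot, finrank_bot] at h
    omega
  obtain ⟨y, hy, hy0⟩ := Submodule.exists_mem_ne_zero_of_ne_bot hne
  obtain ⟨x, hx, hxy⟩ := Submodule.exists_mem_notMem_span_singleton h y
  obtain ⟨hxV, x', hx'V, rfl⟩ := hx
  obtain ⟨hyV, y', hy'V, rfl⟩ := hy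
  refine (mem_range_algebraMap_or_mem_span_singleton hq (hV x' hx'V) (hV y' hy'V) (hV _ hxV)
    (hV _ hyV) (right_ne_zero_of_mul hy0)).resolve_right fun hx' => hxy ?_
  obtain ⟨s, rfl⟩ := Submodule.mem_span_singleton.mp hx'
  exact Submodule.mem_span_singleton.mpr ⟨s, smul_comm s δ y'⟩

end

theorem stmt10_general (q n k : ℕ) (hk : 0 < k)
    (Fq F : Type*) [Field Fq] [Fintype Fq] [Field F] [Fintype F] [Algebra Fq F]
    (hq : Fintype.card Fq = q) (hn : Module.finrank Fq F = n)
    (V : Submodule Fq F) (hkV : Module.finrank Fq V = k)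
    (hPV : subspacePoly (V : Set F) = X ^ q ^ k + X ^ q + X) :
    Set.ncard {W : Submodule Fq F | ∃ α : F, α ≠ 0 ∧ (W : Set F) = α • (V : Set F)} =
      (q ^ n - 1) / (q - 1) ∧
    ∀ U ∈ {W : Submodule Fq F | ∃ α : F, α ≠ 0 ∧ (W : Set F) = α • (V : Set F)},
      ∀ W ∈ {W : Submodule Fq F | ∃ α : F, α ≠ 0 ∧ (W : Set F) = α • (V : Set F)},
        U ≠ W → Module.finrank Fq ↥(U ⊓ W) ≤ 1 := by
  have hV : ∀ v ∈ V, v ^ q ^ k + v ^ q + v = 0 := fun v hv => by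
    simpa [hPV] using isRoot_subspacePoly (V := (V : Set F)) hv
  have hV0 : V ≠ ⊥ := by
    rintro rfl
    rw [finrank_bot] at hkV
    omega
  rw [setOf_smul_eq_orbit_units]
  refine ⟨?_, ?_⟩
  · have hcard :
        Nat.card (MulAction.stabilizer Fˣ V) * (MulAction.orbit Fˣ V).ncard = q ^ n - 1 := by
      rw [← MulAction.index_stabilizer, Subgroup.card_mul_index, Nat.card_units,
        Module.natCard_eq_pow_finrank (K := Fq), Nat.card_eq_fintype_card, hq, hn]
    rw [card_stabilizer_units hq hV hV0] at hcard
    have hq1 : 0 < q - 1 := by have := hq ▸ Fintype.one_lt_card (α := Fq); omega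
    rw [← hcard, Nat.mul_div_cancel_left _ hq1]
  · rintro _ ⟨a, rfl⟩ _ ⟨b, rfl⟩ hne
    dsimp only at hne ⊢
    by_contra! h
    have hab : a⁻¹ * b ∈ MulAction.stabilizer Fˣ V :=
      (units_mem_stabilizer_iff hq hV hV0).mpr <| mem_range_algebraMap_of_one_lt_finrank_inf hq hV
        (h.trans_eq (finrank_smul_inf_smul V a b))
    exact hne (by rw [← mul_inv_cancel_left a b, mul_smul, hab])

theorem stmt10 (q n k : ℕ) (hk : 0 < k)
    (Fq F : Type*) [Field Fq] [Fintype Fq] [Field F] [Fintype F] [Algebra Fq F]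
    (hq : Fintype.card Fq = q) (hn : Module.finrank Fq F = n)
    (hdvd : (q ^ k - 1) ∣ n)
    (hirr : Irreducible (X ^ (q ^ k - 1) + X ^ (q - 1) + 1 : Fq[X]))
    (V : Submodule Fq F) (hkV : Module.finrank Fq V = k)
    (hPV : subspacePoly (V : Set F) = X ^ q ^ k + X ^ q + X) :
    Set.ncard {W : Submodule Fq F | ∃ α : F, α ≠ 0 ∧ (W : Set F) = α • (V : Set F)} =
      (q ^ n - 1) / (q - 1) ∧
    ∀ U ∈ {W : Submodule Fq F | ∃ α : F, α ≠ 0 ∧ (W : Set F) = α • (V : Set F)},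
      ∀ W ∈ {W : Submodule Fq F | ∃ α : F, α ≠ 0 ∧ (W : Set F) = α • (V : Set F)},
        U ≠ W → Module.finrank Fq ↥(U ⊓ W) ≤ 1 :=
  stmt10_general q n k hk Fq F hq hn V hkV hPV
end

section
/- Let V be a k-dimensional F_q-subspace of F_{q^n} with P_V(x) = x^{q^k} + alpha_1 x^q + alpha_0 x, alpha_1 != 0. For i in {0,...,n-1}, there exists alpha in F_{q^n}^* with F^i(V) = alpha V if and only if (alpha_0^{(q^k - q)/(q-1)} / alpha_1^{(q^k - 1)/(q-1)})^{q^i - 1} = 1. -/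
/-!
The roots of `P_V` are exactly the elements of `V`, so `F^i(V)` and `αV` are both zero sets of
trinomials `x^{q^k} + b x^q + c x`: applying the `q^i`-Frobenius to `P_V` gives the coefficients
`(α₁^{q^i}, α₀^{q^i})`, scaling by `α` gives `(α₁ α^{q^k-q}, α₀ α^{q^k-1})`. Two such zero sets of
size `q^k > q` coincide only if the coefficients agree, as the difference of the trinomials has
degree at most `q`. Hence `F^i(V) = αV` means `α₁^{q^i-1} = α^{q^k-q}` and
`α₀^{q^i-1} = α^{q^k-1}`; eliminating `α`, or taking `α = (α₀/α₁)^{(q^i-1)/(q-1)}` conversely,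
gives the condition. Here `q < q^k` because `α₁ ≠ 0`, and `α₀ ≠ 0` because `P_V` is squarefree.
-/

open Pointwise

open Polynomial

section SubspacePoly

variable {F : Type*} [Field F] [Fintype F]

theorem monic_subspacePoly (s : Set F) : (subspacePoly s).Monic :=
  monic_prod_of_monic _ _ fun v _ => monic_X_sub_C v

theorem roots_subspacePoly (s : Set F) : (subspacePoly s).roots = s.toFinite.toFinset.val :=
  roots_prod_X_sub_C _

theorem natDegree_subspacePoly (s : Set F) : (subspacePoly s).natDegree = s.ncard := by
  rw [Set.ncard_eq_toFinset_card s]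
  exact natDegree_finsetProd_X_sub_C_eq_card _ id

theorem eval_subspacePoly_eq_zero_iff (s : Set F) (x : F) :
    (subspacePoly s).eval x = 0 ↔ x ∈ s := by
  rw [← IsRoot.def, ← mem_roots (monic_subspacePoly s).ne_zero, roots_subspacePoly,
    Finset.mem_val, Set.Finite.mem_toFinset]

theorem squarefree_subspacePoly (s : Set F) : Squarefree (subspacePoly s) :=
  (separable_prod_X_sub_C_iff' (f := id)).mpr (fun _ _ _ _ => id) |>.squarefree

end SubspacePoly

section Trinomial

variable {F : Type*} [Field F] {N q : ℕ} {b c : F}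

def trinomialRoots (N q : ℕ) (b c : F) : Set F :=
  {x | x ^ N + b * x ^ q + c * x = 0}

theorem lt_of_monic_of_natDegree_trinomial (hq : 1 < q) (hb : b ≠ 0)
    (hmonic : (X ^ N + C b * X ^ q + C c * X : F[X]).Monic)
    (hdeg : (X ^ N + C b * X ^ q + C c * X : F[X]).natDegree = N) : q < N := by
  have hcoeff : (X ^ N + C b * X ^ q + C c * X : F[X]).coeff q = (if q = N then 1 else 0) + b := by
    simp [coeff_X_pow, coeff_X, hq.ne]
  by_contra! hNq
  rcases hNq.lt_or_eq with hlt | rfl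
  · have := coeff_eq_zero_of_natDegree_lt (hdeg ▸ hlt)
    simp [hcoeff, hlt.ne'] at this
    exact hb this
  · have := hmonic.coeff_natDegree
    rw [hdeg, hcoeff, if_pos rfl, add_eq_left] at this
    exact hb this

theorem ne_zero_of_squarefree_trinomial (hq : 2 ≤ q) (hN : 2 ≤ N)
    (h : Squarefree (X ^ N + C b * X ^ q + C c * X : F[X])) : c ≠ 0 := by
  rintro rfl
  obtain ⟨N, rfl⟩ := Nat.exists_eq_add_of_le' hN
  obtain ⟨q, rfl⟩ := Nat.exists_eq_add_of_le' hq
  exact not_isUnit_X (h X ⟨X ^ N + C b * X ^ q, by simp only [C_0]; ring⟩)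

theorem image_trinomialRoots (σ : F ≃+* F) :
    σ '' trinomialRoots N q b c = trinomialRoots N q (σ b) (σ c) := by
  ext y
  obtain ⟨x, rfl⟩ := σ.surjective y
  simp only [σ.injective.mem_set_image, trinomialRoots, Set.mem_ofPred_eq, ← map_pow, ← map_mul,
    ← map_add, map_eq_zero_iff σ σ.injective]

theorem smul_trinomialRoots {α : F} (hα : α ≠ 0) (hqN : q ≤ N) (hN : 1 ≤ N) :
    α • trinomialRoots N q b c = trinomialRoots N q (b * α ^ (N - q)) (c * α ^ (N - 1)) := by
  ext y
  obtain ⟨x, rfl⟩ : ∃ x, y = α * x := ⟨α⁻¹ * y, by field_simp⟩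
  have hscale : (α * x) ^ N + b * α ^ (N - q) * (α * x) ^ q + c * α ^ (N - 1) * (α * x)
      = α ^ N * (x ^ N + b * x ^ q + c * x) := by
    have h1 := pow_sub_mul_pow α hqN
    have h2 := pow_sub_one_mul (by omega : N ≠ 0) α
    linear_combination (b * x ^ q) * h1 + (c * x) * h2
  rw [Set.mem_smul_set_iff_inv_smul_mem₀ hα, smul_eq_mul, inv_mul_cancel_left₀ hα]
  simp only [trinomialRoots, Set.mem_ofPred_eq, hscale, mul_eq_zero, pow_ne_zero _ hα, false_or]

theorem eq_zero_of_forall_mul_pow_add_mul_eq_zero {s : Set F} (hq : 1 < q) (hs : q < s.ncard)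
    (h : ∀ x ∈ s, b * x ^ q + c * x = 0) : b = 0 ∧ c = 0 := by
  have hfin : s.Finite := Set.finite_of_ncard_pos (by omega)
  have hp : C b * X ^ q + C c * X = 0 := by
    refine eq_zero_of_natDegree_lt_card_of_eval_eq_zero' _ hfin.toFinset
      (fun x hx => by simpa using h x (hfin.mem_toFinset.mp hx)) ?_
    rw [← Set.ncard_eq_toFinset_card s hfin]
    refine lt_of_le_of_lt (natDegree_add_le_of_degree_le ?_ ?_) hs
    · exact natDegree_C_mul_X_pow_le b q
    · exact (natDegree_C_mul_le c X).trans (natDegree_X_le.trans hq.le)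
  constructor
  · simpa [coeff_X, hq.ne] using congrArg (coeff · q) hp
  · simpa [coeff_X, hq.ne] using congrArg (coeff · 1) hp

theorem trinomialRoots_eq_iff {b' c' : F} (hq : 1 < q)
    (hcard : q < (trinomialRoots N q b c).ncard) :
    trinomialRoots N q b c = trinomialRoots N q b' c' ↔ b = b' ∧ c = c' := by
  refine ⟨fun h => ?_, by rintro ⟨rfl, rfl⟩; rfl⟩
  have := eq_zero_of_forall_mul_pow_add_mul_eq_zero (b := b - b') (c := c - c') hq hcard
    fun x hx => by
      have hx' : x ∈ trinomialRoots N q b' c' := h ▸ hx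
      simp only [trinomialRoots, Set.mem_ofPred_eq] at hx hx'
      linear_combination hx - hx'
  simpa [sub_eq_zero] using this

theorem coe_eq_trinomialRoots [Fintype F] {s : Set F}
    (hP : subspacePoly s = X ^ N + C b * X ^ q + C c * X) : s = trinomialRoots N q b c := by
  ext x
  rw [← eval_subspacePoly_eq_zero_iff, hP]
  simp [trinomialRoots]

end Trinomial

theorem exists_pow_eq_and_pow_eq_iff {F : Type*} [Field F] {a b : F} (ha : a ≠ 0) (hb : b ≠ 0)
    (d m A : ℕ) :
    (∃ α : F, α ≠ 0 ∧ b ^ (d * m) = α ^ (d * A) ∧ a ^ (d * m) = α ^ (d * (A + 1))) ↔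
      (a ^ A / b ^ (A + 1)) ^ (d * m) = 1 := by
  have hv : b ^ (d * m) ≠ 0 := pow_ne_zero _ hb
  have hdiv : (a ^ A / b ^ (A + 1)) ^ (d * m) = (a ^ (d * m)) ^ A / (b ^ (d * m)) ^ (A + 1) := by
    ring
  rw [hdiv, div_eq_one_iff_eq (pow_ne_zero _ hv)]
  constructor
  · rintro ⟨α, -, hb', ha'⟩
    rw [ha', hb']
    ring
  · intro h
    refine ⟨(a / b) ^ m, pow_ne_zero _ (div_ne_zero ha hb), ?_, ?_⟩
    · calc b ^ (d * m) = (b ^ (d * m)) ^ (A + 1) / (b ^ (d * m)) ^ A := by field_simp; ring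
        _ = ((a / b) ^ m) ^ (d * A) := by rw [← h]; ring
    · calc a ^ (d * m) = a ^ (d * m) * (a ^ (d * m)) ^ A / (b ^ (d * m)) ^ (A + 1) := by
            rw [h]; field_simp
        _ = ((a / b) ^ m) ^ (d * (A + 1)) := by ring

theorem Nat.sub_one_dvd_pow_sub_self (q : ℕ) {k : ℕ} (hk : k ≠ 0) : q - 1 ∣ q ^ k - q := by
  obtain ⟨k, rfl⟩ := Nat.exists_eq_succ_of_ne_zero hk
  rw [pow_succ', ← Nat.mul_sub_one]
  exact (Nat.sub_one_dvd_pow_sub_one q k).mul_left q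

theorem Nat.pow_sub_one_div_sub_one_eq_succ {q k : ℕ} (hq : 1 < q) (hk : k ≠ 0) :
    (q ^ k - 1) / (q - 1) = (q ^ k - q) / (q - 1) + 1 := by
  have hle : q ≤ q ^ k := Nat.le_self_pow hk q
  rw [show q ^ k - 1 = (q ^ k - q) + (q - 1) by omega, Nat.add_div_right _ (by omega)]

theorem FiniteField.exists_ringEquiv_apply_eq_pow (K L : Type*) [Field K] [Fintype K] [Field L]
    [Algebra K L] [Algebra.IsAlgebraic K L] (i : ℕ) : ∃ σ : L ≃+* L, ∀ x, σ x = x ^ Fintype.card K ^ i :=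
  ⟨((frobeniusAlgEquivOfAlgebraic K L) ^ i).toRingEquiv, fun x => by
    simp [AlgEquiv.coe_pow, coe_frobeniusAlgEquivOfAlgebraic]⟩

theorem stmt11_general (q k i : ℕ)
    (Fq F : Type*) [Field Fq] [Fintype Fq] [Field F] [Fintype F] [Algebra Fq F]
    (hq : Fintype.card Fq = q)
    (V : Submodule Fq F) (hkV : Module.finrank Fq V = k)
    (a0 a1 : F) (ha1 : a1 ≠ 0)
    (hP : subspacePoly (V : Set F) = X ^ q ^ k + C a1 * X ^ q + C a0 * X) :
    (∃ α : F, α ≠ 0 ∧ (fun x : F => x ^ q ^ i) '' (V : Set F) = α • (V : Set F)) ↔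
      (a0 ^ ((q ^ k - q) / (q - 1)) / a1 ^ ((q ^ k - 1) / (q - 1))) ^ (q ^ i - 1) = 1 := by
  have hq1 : 1 < q := hq ▸ Fintype.one_lt_card
  have hcard : (V : Set F).ncard = q ^ k := by
    rw [← Nat.card_coe_set_eq, SetLike.coe_sort_coe, Module.natCard_eq_pow_finrank (K := Fq),
      hkV, Nat.card_eq_fintype_card, hq]
  have hqN : q < q ^ k := lt_of_monic_of_natDegree_trinomial hq1 ha1
    (hP ▸ monic_subspacePoly _) (by rw [← hP, natDegree_subspacePoly, hcard])
  have hk : k ≠ 0 := by rintro rfl; rw [pow_zero] at hqN; omega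
  have ha0 : a0 ≠ 0 :=
    ne_zero_of_squarefree_trinomial hq1 (by omega) (hP ▸ squarefree_subspacePoly _)
  have hV := coe_eq_trinomialRoots hP
  obtain ⟨σ, hσ⟩ := hq ▸ FiniteField.exists_ringEquiv_apply_eq_pow Fq F i
  rw [show (fun x : F => x ^ q ^ i) = σ from funext fun x => (hσ x).symm]
  have himage : σ '' (V : Set F) = trinomialRoots (q ^ k) q (a1 ^ q ^ i) (a0 ^ q ^ i) := by
    rw [hV, image_trinomialRoots, hσ, hσ]
  have himage_card : q < (σ '' (V : Set F)).ncard := by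
    rwa [Set.ncard_image_of_injective _ σ.injective, hcard]
  set A := (q ^ k - q) / (q - 1)
  have hA : q ^ k - q = (q - 1) * A :=
    (Nat.mul_div_cancel' (Nat.sub_one_dvd_pow_sub_self q hk)).symm
  obtain ⟨m, hm⟩ := Nat.sub_one_dvd_pow_sub_one q i
  have hqi : q ^ i = (q - 1) * m + 1 := by have := Nat.one_le_pow i q (by omega); omega
  rw [Nat.pow_sub_one_div_sub_one_eq_succ hq1 hk, hm, ← exists_pow_eq_and_pow_eq_iff ha0 ha1]
  refine exists_congr fun α => and_congr_right fun hα => ?_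
  rw [himage, hV, smul_trinomialRoots hα hqN.le (by omega),
    trinomialRoots_eq_iff hq1 (himage ▸ himage_card), hqi, hA,
    show q ^ k - 1 = (q - 1) * (A + 1) by rw [mul_add, mul_one, ← hA]; omega,
    pow_succ', pow_succ', mul_right_inj' ha1, mul_right_inj' ha0]

theorem stmt11 (q n k i : ℕ)
    (Fq F : Type*) [Field Fq] [Fintype Fq] [Field F] [Fintype F] [Algebra Fq F]
    (hq : Fintype.card Fq = q) (hn : Module.finrank Fq F = n)
    (V : Submodule Fq F) (hkV : Module.finrank Fq V = k)
    (a0 a1 : F) (ha1 : a1 ≠ 0)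
    (hP : subspacePoly (V : Set F) = X ^ q ^ k + C a1 * X ^ q + C a0 * X)
    (hi : i < n) :
    (∃ α : F, α ≠ 0 ∧ (fun x : F => x ^ q ^ i) '' (V : Set F) = α • (V : Set F)) ↔
      (a0 ^ ((q ^ k - q) / (q - 1)) / a1 ^ ((q ^ k - 1) / (q - 1))) ^ (q ^ i - 1) = 1 :=
  stmt11_general q k i Fq F hq V hkV a0 a1 ha1 hP
end

section
/- Let d divide gcd(n,k) and let C_d be the set of k-dimensional F_q-subspaces of F_{q^n} that are F_{q^d}-subspaces. Then C_d is cyclic: for every V in C_d and alpha in F_{q^n}^*, alpha V is in C_d. Moreover |C_d| equals the Gaussian binomial coefficient [n/d choose k/d]_{q^d}, and any two distinct members U, V of C_d satisfy dim_{F_q}(U ∩ V) <= k - d, i.e., the minimum subspace distance of C_d is at least 2d. -/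
def gaussBinom (Q m r : ℕ) : ℕ :=
  (∏ i ∈ Finset.range r, (Q ^ m - Q ^ i)) / (∏ i ∈ Finset.range r, (Q ^ r - Q ^ i))

def Cdd (q d k : ℕ) (Fq F : Type*) [Field Fq] [Field F] [Algebra Fq F] :
    Set (Submodule Fq F) :=
  {V | Module.finrank Fq V = k ∧ ∀ c x : F, c ^ q ^ d = c → x ∈ V → c * x ∈ V}

/-!
The elements with `c ^ q ^ d = c` form the fixed field `K ≅ 𝔽_{q^d}` of the `d`-th power of
the Frobenius, so the members of `C_d` are exactly the `K`-subspaces of `F` of `K`-dimension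
`k / d`, viewed over `𝔽_q`; restricting scalars multiplies dimensions by `d`. Counting
`K`-subspaces of the `n / d`-dimensional `K`-space `F` via linearly independent tuples gives the
Gaussian binomial, and the intersection of two distinct members is a proper `K`-subspace of
each, so its `𝔽_q`-dimension is a multiple of `d` smaller than `k`. Multiplication by `α ≠ 0`
commutes with `K`-scalars, which gives cyclicity.
-/

open Module

namespace Submodule

variable {R S M : Type*}

theorem exists_restrictScalars_eq_iff [Semiring R] [Semiring S] [AddCommMonoid M] [Module R M]
    [Module S M] [SMul R S] [IsScalarTower R S M] (V : Submodule R M) :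
    (∃ W : Submodule S M, W.restrictScalars R = V) ↔
      ∀ (c : S) (x : M), x ∈ V → c • x ∈ V := by
  refine ⟨?_, fun h => ⟨{ V.toAddSubmonoid with smul_mem' := h }, rfl⟩⟩
  rintro ⟨W, rfl⟩ c x hx
  exact W.smul_mem c hx

theorem finrank_restrictScalars [DivisionRing R] [DivisionRing S] [AddCommGroup M] [Module R S]
    [Module R M] [Module S M] [IsScalarTower R S M] (W : Submodule S M) :
    finrank R (W.restrictScalars R) = finrank R S * finrank S W := by
  rw [((W.restrictScalarsEquiv R).restrictScalars R).finrank_eq, finrank_mul_finrank]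

theorem finrank_inf_lt_of_ne [DivisionRing R] [AddCommGroup M] [Module R M]
    [FiniteDimensional R M] {U V : Submodule R M} {r : ℕ} (hU : finrank R U = r)
    (hV : finrank R V = r) (hUV : U ≠ V) : finrank R ↥(U ⊓ V) < r := by
  refine hU ▸ finrank_lt_finrank_of_lt (inf_le_left.lt_of_ne fun h => hUV ?_)
  exact eq_of_le_of_finrank_eq (h ▸ inf_le_right) (hU.trans hV.symm)

end Submodule

section SubspaceCount

variable {K V : Type*} [Field K] [Fintype K] [AddCommGroup V] [Module K V] [Finite V]

theorem card_linearIndependent_span_eq {r : ℕ} (W : Submodule K V) (hW : finrank K W = r) :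
    Nat.card { s : Fin r → V // LinearIndependent K s ∧ Submodule.span K (Set.range s) = W } =
      ∏ i ∈ Finset.range r, (Fintype.card K ^ r - Fintype.card K ^ i) := by
  have hmem (s : Fin r → V) (hs : Submodule.span K (Set.range s) = W) (i : Fin r) : s i ∈ W :=
    hs ▸ Submodule.subset_span (Set.mem_range_self i)
  have hspan (t : Fin r → W) (ht : LinearIndependent K t) :
      Submodule.span K (Set.range (W.subtype ∘ t)) = W := by
    rw [Set.range_comp, ← Submodule.map_span,
      ht.span_eq_top_of_card_eq_finrank' (by rw [Fintype.card_fin, hW]), Submodule.map_top,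
      Submodule.range_subtype]
  let e : { s : Fin r → V // LinearIndependent K s ∧ Submodule.span K (Set.range s) = W } ≃
      { t : Fin r → W // LinearIndependent K t } :=
    { toFun := fun s => ⟨fun i => ⟨s.1 i, hmem s.1 s.2.2 i⟩,
        (LinearMap.linearIndependent_iff W.subtype W.ker_subtype).mp s.2.1⟩
      invFun := fun t => ⟨W.subtype ∘ t.1,
        (LinearMap.linearIndependent_iff W.subtype W.ker_subtype).mpr t.2, hspan t.1 t.2⟩
      left_inv := fun _ => rfl
      right_inv := fun _ => rfl }
  rw [Nat.card_congr e, card_linearIndependent hW.ge, hW, Finset.prod_range]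

theorem card_submodule_finrank_eq_mul {r : ℕ} (hr : r ≤ finrank K V) :
    Nat.card {W : Submodule K V // finrank K W = r} *
        ∏ i ∈ Finset.range r, (Fintype.card K ^ r - Fintype.card K ^ i) =
      ∏ i ∈ Finset.range r, (Fintype.card K ^ finrank K V - Fintype.card K ^ i) := by
  have := Fintype.ofFinite {W : Submodule K V // finrank K W = r}
  let spanOf : { s : Fin r → V // LinearIndependent K s } →
      {W : Submodule K V // finrank K W = r} := fun s =>
    ⟨Submodule.span K (Set.range s.1), by rw [finrank_span_eq_card s.2, Fintype.card_fin]⟩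
  have fiber (W : {W : Submodule K V // finrank K W = r}) :
      { s // spanOf s = W } ≃
        { s : Fin r → V // LinearIndependent K s ∧ Submodule.span K (Set.range s) = W } :=
    (Equiv.subtypeEquivRight fun _ => Subtype.ext_iff).trans
      (Equiv.subtypeSubtypeEquivSubtypeInter (fun s => LinearIndependent K s)
        (fun s => Submodule.span K (Set.range s) = W.1))
  rw [Finset.prod_range (fun i => Fintype.card K ^ finrank K V - Fintype.card K ^ i),
    ← card_linearIndependent hr, Nat.card_congr (Equiv.sigmaFiberEquiv spanOf).symm,
    Nat.card_sigma, Finset.sum_congr rfl fun W _ => (Nat.card_congr (fiber W)).trans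
    (card_linearIndependent_span_eq W.1 W.2), Finset.sum_const, Finset.card_univ, smul_eq_mul,
    Nat.card_eq_fintype_card]

theorem card_submodule_finrank_eq_gaussBinom {r : ℕ} (hr : r ≤ finrank K V) :
    Nat.card {W : Submodule K V // finrank K W = r} =
      gaussBinom (Fintype.card K) (finrank K V) r := by
  refine (Nat.div_eq_of_eq_mul_left (Finset.prod_pos fun i hi => ?_)
    (card_submodule_finrank_eq_mul hr).symm).symm
  exact Nat.sub_pos_of_lt (Nat.pow_lt_pow_right Fintype.one_lt_card (Finset.mem_range.mp hi))

end SubspaceCount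

namespace FiniteField

variable (Fq F : Type*) [Field Fq] [Fintype Fq] [Field F] [Finite F] [Algebra Fq F]

noncomputable def frobeniusPowFixedField (d : ℕ) : IntermediateField Fq F :=
  IntermediateField.fixedField (Subgroup.zpowers (frobeniusAlgEquivOfAlgebraic Fq F ^ d))

variable {Fq F}

theorem mem_frobeniusPowFixedField {d : ℕ} {x : F} :
    x ∈ frobeniusPowFixedField Fq F d ↔ x ^ Fintype.card Fq ^ d = x := by
  have hpow : ∀ y : F, (frobeniusAlgEquivOfAlgebraic Fq F ^ d) y = y ^ Fintype.card Fq ^ d :=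
    fun y => by rw [AlgEquiv.coe_pow, coe_frobeniusAlgEquivOfAlgebraic_iterate]
  rw [frobeniusPowFixedField, IntermediateField.mem_fixedField_iff, ← hpow]
  refine ⟨fun h => h _ (Subgroup.mem_zpowers _), fun h f hf => ?_⟩
  rw [← AlgEquiv.smul_def, ← MulAction.mem_stabilizer_iff] at h ⊢
  exact Subgroup.zpowers_le.mpr h hf

theorem finrank_frobeniusPowFixedField_left {d : ℕ} (hd : d ∣ finrank Fq F) (hd0 : d ≠ 0) :
    finrank (frobeniusPowFixedField Fq F d) F = finrank Fq F / d := by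
  rw [frobeniusPowFixedField, IntermediateField.finrank_fixedField_eq_card, Nat.card_zpowers,
    orderOf_pow_of_dvd hd0 (by rwa [orderOf_frobeniusAlgEquivOfAlgebraic]),
    orderOf_frobeniusAlgEquivOfAlgebraic]

theorem finrank_frobeniusPowFixedField {d : ℕ} (hd : d ∣ finrank Fq F) (hd0 : d ≠ 0) :
    finrank Fq (frobeniusPowFixedField Fq F d) = d := by
  have h := finrank_mul_finrank Fq (frobeniusPowFixedField Fq F d) F
  rw [finrank_frobeniusPowFixedField_left hd hd0] at h
  refine Nat.eq_of_mul_eq_mul_right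
    (Nat.div_pos (Nat.le_of_dvd finrank_pos hd) (Nat.pos_of_ne_zero hd0)) ?_
  rw [h, Nat.mul_div_cancel' hd]

end FiniteField

theorem map_mulLeft_mem_Cdd {q d k : ℕ} {Fq F : Type*} [Field Fq] [Field F] [Algebra Fq F]
    {V : Submodule Fq F} (hV : V ∈ Cdd q d k Fq F) {α : F} (hα : α ≠ 0) :
    V.map (LinearMap.mulLeft Fq α) ∈ Cdd q d k Fq F := by
  obtain ⟨hVk, hVc⟩ := hV
  refine ⟨?_, fun c x hc hx => ?_⟩
  · rw [← (V.equivMapOfInjective _ (mul_right_injective₀ hα)).finrank_eq, hVk]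
  · obtain ⟨y, hy, rfl⟩ := Submodule.mem_map.mp hx
    exact ⟨c * y, hVc c y hc hy, by simp only [LinearMap.mulLeft_apply]; ring⟩

section FrobeniusFixedField

open FiniteField

variable {q d k : ℕ} {Fq F : Type*} [Field Fq] [Fintype Fq] [Field F] [Finite F] [Algebra Fq F]

theorem finrank_restrictScalars_frobeniusPowFixedField (hdF : d ∣ finrank Fq F) (hd0 : d ≠ 0)
    (W : Submodule (frobeniusPowFixedField Fq F d) F) :
    finrank Fq (W.restrictScalars Fq) = d * finrank (frobeniusPowFixedField Fq F d) W := by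
  rw [Submodule.finrank_restrictScalars, finrank_frobeniusPowFixedField hdF hd0]

theorem Cdd_eq_image_restrictScalars (hq : Fintype.card Fq = q) (hdF : d ∣ finrank Fq F)
    (hdk : d ∣ k) (hd0 : d ≠ 0) :
    Cdd q d k Fq F =
      (fun W : Submodule (frobeniusPowFixedField Fq F d) F => W.restrictScalars Fq) ''
        {W | finrank (frobeniusPowFixedField Fq F d) W = k / d} := by
  ext V
  constructor
  · rintro ⟨hVk, hVc⟩
    obtain ⟨W, rfl⟩ :=
      (V.exists_restrictScalars_eq_iff (S := frobeniusPowFixedField Fq F d)).mpr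
        fun c x hx => hVc c x (hq ▸ mem_frobeniusPowFixedField.mp c.2) hx
    refine ⟨W, ?_, rfl⟩
    rw [finrank_restrictScalars_frobeniusPowFixedField hdF hd0] at hVk
    rw [Set.mem_ofPred_eq, ← hVk, Nat.mul_div_cancel_left _ (Nat.pos_of_ne_zero hd0)]
  · rintro ⟨W, hW, rfl⟩
    refine ⟨?_, fun c x hc hx => ?_⟩
    · rw [finrank_restrictScalars_frobeniusPowFixedField hdF hd0, hW, Nat.mul_div_cancel' hdk]
    · exact W.smul_mem ⟨c, mem_frobeniusPowFixedField.mpr (hq ▸ hc)⟩ hx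

theorem ncard_Cdd (hq : Fintype.card Fq = q) (hdF : d ∣ finrank Fq F) (hdk : d ∣ k)
    (hd0 : d ≠ 0) (hkF : k ≤ finrank Fq F) :
    (Cdd q d k Fq F).ncard = gaussBinom (q ^ d) (finrank Fq F / d) (k / d) := by
  have := Fintype.ofFinite (frobeniusPowFixedField Fq F d)
  have hcard : Fintype.card (frobeniusPowFixedField Fq F d) = q ^ d := by
    rw [card_eq_pow_finrank (K := Fq), finrank_frobeniusPowFixedField hdF hd0, hq]
  have hr : k / d ≤ finrank (frobeniusPowFixedField Fq F d) F :=
    finrank_frobeniusPowFixedField_left hdF hd0 ▸ Nat.div_le_div_right hkF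
  rw [Cdd_eq_image_restrictScalars hq hdF hdk hd0,
    Set.ncard_image_of_injective _ (Submodule.restrictScalars_injective _ _ _),
    ← Nat.card_coe_set_eq, Set.coe_ofPred, card_submodule_finrank_eq_gaussBinom hr, hcard,
    finrank_frobeniusPowFixedField_left hdF hd0]

theorem finrank_inf_le_of_mem_Cdd (hq : Fintype.card Fq = q) (hdF : d ∣ finrank Fq F)
    (hdk : d ∣ k) (hd0 : d ≠ 0) {U V : Submodule Fq F} (hU : U ∈ Cdd q d k Fq F)
    (hV : V ∈ Cdd q d k Fq F) (hUV : U ≠ V) : finrank Fq ↥(U ⊓ V) ≤ k - d := by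
  rw [Cdd_eq_image_restrictScalars hq hdF hdk hd0] at hU hV
  obtain ⟨WU, hWU, rfl⟩ := hU
  obtain ⟨WV, hWV, rfl⟩ := hV
  have hlt := Submodule.finrank_inf_lt_of_ne hWU hWV fun h => hUV (h ▸ rfl)
  rw [← Submodule.restrictScalars_inf, finrank_restrictScalars_frobeniusPowFixedField hdF hd0]
  calc d * finrank _ ↥(WU ⊓ WV) ≤ d * (k / d - 1) := Nat.mul_le_mul_left d (by omega)
    _ = k - d := by rw [Nat.mul_sub_one, Nat.mul_div_cancel' hdk]

end FrobeniusFixedField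

theorem stmt16_general (q n k d : ℕ) (hd : d ∣ Nat.gcd n k) (hd0 : 0 < d) (hkn : k < n)
    (Fq F : Type*) [Field Fq] [Fintype Fq] [Field F] [Fintype F] [Algebra Fq F]
    (hq : Fintype.card Fq = q) (hn : Module.finrank Fq F = n) :
    (∀ V ∈ Cdd q d k Fq F, ∀ α : F, α ≠ 0 →
      V.map (LinearMap.mulLeft Fq α) ∈ Cdd q d k Fq F) ∧
    Set.ncard (Cdd q d k Fq F) = gaussBinom (q ^ d) (n / d) (k / d) ∧
    ∀ U ∈ Cdd q d k Fq F, ∀ V ∈ Cdd q d k Fq F, U ≠ V →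
      Module.finrank Fq ↥(U ⊓ V) ≤ k - d := by
  have hdF : d ∣ finrank Fq F := hn ▸ hd.trans (Nat.gcd_dvd_left n k)
  have hdk : d ∣ k := hd.trans (Nat.gcd_dvd_right n k)
  refine ⟨fun V hV α hα => map_mulLeft_mem_Cdd hV hα, ?_,
    fun U hU V hV hUV => finrank_inf_le_of_mem_Cdd hq hdF hdk hd0.ne' hU hV hUV⟩
  rw [ncard_Cdd hq hdF hdk hd0.ne' (hn ▸ hkn.le), hn]

theorem stmt16 (q n k d : ℕ) (hd : d ∣ Nat.gcd n k) (hd0 : 0 < d) (hk : 0 < k) (hkn : k < n)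
    (Fq F : Type*) [Field Fq] [Fintype Fq] [Field F] [Fintype F] [Algebra Fq F]
    (hq : Fintype.card Fq = q) (hn : Module.finrank Fq F = n) :
    (∀ V ∈ Cdd q d k Fq F, ∀ α : F, α ≠ 0 →
      V.map (LinearMap.mulLeft Fq α) ∈ Cdd q d k Fq F) ∧
    Set.ncard (Cdd q d k Fq F) = gaussBinom (q ^ d) (n / d) (k / d) ∧
    ∀ U ∈ Cdd q d k Fq F, ∀ V ∈ Cdd q d k Fq F, U ≠ V →
      Module.finrank Fq ↥(U ⊓ V) ≤ k - d :=
  stmt16_general q n k d hd hd0 hkn Fq F hq hn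
end

section
/- For 0 < k < n, the Gaussian binomial coefficient satisfies [n choose k]_q = sum over d dividing gcd(n,k) of ((q^n - 1)/(q^d - 1)) * M_{q^d}(n/d, k/d), where M_Q(m,r) denotes the number of orbits of size (Q^m - 1)/(Q - 1) (full length orbits) under the action of F_{Q^m}^* on the r-dimensional F_Q-subspaces of F_{Q^m}. -/
open Pointwise

def subspaceSets (q d k : ℕ) (F : Type*) [Field F] : Set (Set F) :=
  {S | 0 ∈ S ∧ (∀ x ∈ S, ∀ y ∈ S, x + y ∈ S) ∧
       (∀ c x : F, c ^ q ^ d = c → x ∈ S → c * x ∈ S) ∧ S.ncard = q ^ k}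

noncomputable def fullOrbitCount (q d n k : ℕ) (F : Type*) [Field F] : ℕ :=
  Set.ncard {O : Set (Set F) |
    (∃ S ∈ subspaceSets q d k F, O = {T | ∃ α : F, α ≠ 0 ∧ T = α • S}) ∧
    O.ncard = (q ^ n - 1) / (q ^ d - 1)}

/-!
The `k`-dimensional `𝔽_q`-subspaces of `F = 𝔽_{q^n}` are counted by the Gaussian binomial
coefficient; group them into orbits under `Fˣ`. The multiplier field `{c | c • S ⊆ S}` of
such a subspace `S` is a subfield `𝔽_{q^e}` with `e ∣ gcd n k`, `S` is an `𝔽_{q^e}`-subspace,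
and by orbit–stabilizer the orbit of `S` has length `(q^n - 1)/(q^e - 1)`. These lengths are
pairwise distinct for `e ∣ n`, so the orbits of length `(q^n - 1)/(q^d - 1)` are exactly the
full length orbits of `𝔽_{q^d}`-subspaces, and summing over `d` gives the formula.
-/

open Module MulAction

section Grassmannian

variable {K V : Type*} [Field K] [Fintype K] [AddCommGroup V] [Module K V] [Finite V]

def linearIndependentSpanEquiv {k : ℕ} (W : Submodule K V) (hW : finrank K W = k) :
    {s : {s : Fin k → V // LinearIndependent K s} // Submodule.span K (Set.range s.1) = W} ≃
      {t : Fin k → W // LinearIndependent K t} where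
  toFun s := ⟨fun i => ⟨s.1.1 i, s.2.le (Submodule.subset_span (Set.mem_range_self i))⟩,
    s.1.2.of_comp W.subtype⟩
  invFun t := ⟨⟨W.subtype ∘ t.1, t.2.map' W.subtype W.ker_subtype⟩, by
    have hspan : Submodule.span K (Set.range t.1) = ⊤ :=
      t.2.span_eq_top_of_card_eq_finrank' (by rw [Fintype.card_fin, hW])
    rw [Set.range_comp, ← Submodule.map_span, hspan, Submodule.map_subtype_top]⟩
  left_inv _ := rfl
  right_inv _ := rfl

theorem natCard_submodule_finrank_mul_prod {k : ℕ} (hk : k ≤ finrank K V) :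
    Nat.card {W : Submodule K V // finrank K W = k} *
        ∏ i ∈ Finset.range k, (Fintype.card K ^ k - Fintype.card K ^ i) =
      ∏ i ∈ Finset.range k, (Fintype.card K ^ finrank K V - Fintype.card K ^ i) := by
  let span (s : {s : Fin k → V // LinearIndependent K s}) :
      {W : Submodule K V // finrank K W = k} :=
    ⟨Submodule.span K (Set.range s.1), by rw [finrank_span_eq_card s.2, Fintype.card_fin]⟩
  have hfiber (W : {W : Submodule K V // finrank K W = k}) : Nat.card {s // span s = W} =
      ∏ i ∈ Finset.range k, (Fintype.card K ^ k - Fintype.card K ^ i) := by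
    have h := card_linearIndependent (K := K) (V := W.1) (k := k) W.2.ge
    rw [W.2] at h
    rw [← Fin.prod_univ_eq_prod_range (fun i => Fintype.card K ^ k - Fintype.card K ^ i), ← h]
    exact Nat.card_congr (((Equiv.refl _).subtypeEquiv fun s => Subtype.ext_iff).trans
      (linearIndependentSpanEquiv W.1 W.2))
  have := Fintype.ofFinite {W : Submodule K V // finrank K W = k}
  rw [← Fin.prod_univ_eq_prod_range (fun i => Fintype.card K ^ finrank K V - Fintype.card K ^ i),
    ← card_linearIndependent hk, ← Nat.card_congr (Equiv.sigmaFiberEquiv span), Nat.card_sigma,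
    Finset.sum_congr rfl fun W _ => hfiber W, Finset.sum_const, smul_eq_mul, Finset.card_univ,
    Nat.card_eq_fintype_card]

end Grassmannian

theorem ne_zero_of_natCard_eq_pow {α : Type*} [Finite α] [Nontrivial α] {q n : ℕ}
    (h : Nat.card α = q ^ n) : n ≠ 0 := by
  rintro rfl
  exact (Finite.one_lt_card (α := α)).ne' (h.trans (pow_zero q))

section PowEqSelf

variable {F : Type*} [Field F]

open Polynomial in
theorem ncard_setOf_pow_eq_self_le {m : ℕ} (hm : 1 < m) : {c : F | c ^ m = c}.ncard ≤ m := by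
  classical
  have hP : (X ^ m - X : F[X]).natDegree = m := by
    rw [natDegree_sub_eq_left_of_natDegree_lt] <;> simp [hm]
  have hP0 : (X ^ m - X : F[X]) ≠ 0 := ne_zero_of_natDegree_gt (hP ▸ zero_lt_one.trans hm)
  have hroots : {c : F | c ^ m = c} = ((X ^ m - X : F[X]).roots.toFinset : Set F) := by
    ext c
    simp [mem_roots hP0, sub_eq_zero]
  rw [hroots, Set.ncard_coe_finset]
  exact (Multiset.toFinset_card_le _).trans ((card_roots' _).trans hP.le)

open Polynomial in
theorem ncard_setOf_pow_eq_self [Finite F] {m : ℕ} (hm : 1 < m)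
    (hdvd : m - 1 ∣ Nat.card F - 1) : {c : F | c ^ m = c}.ncard = m := by
  have hm1 : 0 < m - 1 := by omega
  have hF : 0 < Nat.card F - 1 := by
    have := Finite.one_lt_card (α := F)
    omega
  obtain ⟨g, hg⟩ := IsCyclic.exists_ofOrder_eq_natCard (α := Fˣ)
  rw [Nat.card_units] at hg
  have hgen : IsPrimitiveRoot (g : F) (Nat.card F - 1) :=
    hg ▸ IsPrimitiveRoot.coe_units_iff.mpr (IsPrimitiveRoot.orderOf g)
  have hζ : IsPrimitiveRoot ((g : F) ^ ((Nat.card F - 1) / (m - 1))) (m - 1) := by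
    have := hgen.pow_of_dvd (Nat.div_pos (Nat.le_of_dvd hF hdvd) hm1).ne'
      (Nat.div_dvd_of_dvd hdvd)
    rwa [Nat.div_div_self hdvd hF.ne'] at this
  have hset : {c : F | c ^ m = c} = insert 0 (nthRootsFinset (m - 1) (1 : F) : Set F) := by
    ext c
    rcases eq_or_ne c 0 with rfl | hc
    · simp [zero_pow (by omega : m ≠ 0)]
    · have : c ^ m = c ^ (m - 1) * c := by rw [← pow_succ, Nat.sub_add_cancel hm.le]
      simp [mem_nthRootsFinset hm1, hc, this]
  rw [hset, Set.ncard_insert_of_notMem (by simp [mem_nthRootsFinset hm1, zero_pow hm1.ne']),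
    Set.ncard_coe_finset, hζ.card_nthRootsFinset]
  omega

theorem Subfield.coe_eq_setOf_pow_natCard_eq_self [Finite F] (L : Subfield F) :
    (L : Set F) = {c : F | c ^ Nat.card L = c} := by
  have := Fintype.ofFinite L
  refine Set.eq_of_subset_of_ncard_le (fun c hc => ?_) ?_ (Set.toFinite _)
  · simpa [Nat.card_eq_fintype_card] using congrArg Subtype.val (FiniteField.pow_card ⟨c, hc⟩)
  · rw [← Nat.card_coe_set_eq]
    exact ncard_setOf_pow_eq_self_le Finite.one_lt_card

theorem exists_subfield_coe_eq_setOf_pow_eq_self [Finite F] {q : ℕ} (hq : q ∣ Nat.card F) :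
    ∃ K : Subfield F, (K : Set F) = {c : F | c ^ q = c} := by
  have := Fintype.ofFinite F
  rw [Nat.card_eq_fintype_card] at hq
  obtain ⟨p, _, s, hp, hcard⟩ := FiniteField.card' F
  -- `q` divides `p ^ s`, so `x ↦ x ^ q` is an iterate of the Frobenius endomorphism.
  obtain ⟨u, -, rfl⟩ := (Nat.dvd_prime_pow hp).1 (hcard ▸ hq)
  have : Fact p.Prime := ⟨hp⟩
  exact ⟨RingHom.eqLocusField (iterateFrobenius F p u) (RingHom.id F), by
    ext c; simp [RingHom.eqLocusField, iterateFrobenius_def]⟩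

theorem exists_subfield_natCard_eq_of_natCard_eq_pow [Finite F] {q n : ℕ} (hq : 1 < q)
    (hF : Nat.card F = q ^ n) :
    ∃ K : Subfield F, (K : Set F) = {c | c ^ q = c} ∧ Nat.card K = q := by
  have hn := ne_zero_of_natCard_eq_pow hF
  obtain ⟨K, hK⟩ := exists_subfield_coe_eq_setOf_pow_eq_self (F := F) (hF ▸ dvd_pow_self q hn)
  refine ⟨K, hK, ?_⟩
  rw [← SetLike.coe_sort_coe, Nat.card_coe_set_eq, hK]
  exact ncard_setOf_pow_eq_self hq (hF ▸ Nat.sub_one_dvd_pow_sub_one q n)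

end PowEqSelf

namespace AddSubgroup

variable {F : Type*} [Field F] [Finite F]

def multiplierField (W : AddSubgroup F) : Subfield F where
  carrier := {c | ∀ x ∈ W, c * x ∈ W}
  mul_mem' ha hb x hx := by rw [mul_assoc]; exact ha _ (hb x hx)
  one_mem' x hx := by rwa [one_mul]
  add_mem' ha hb x hx := by rw [add_mul]; exact W.add_mem (ha x hx) (hb x hx)
  zero_mem' x _ := by rw [zero_mul]; exact W.zero_mem
  neg_mem' ha x hx := by rw [neg_mul]; exact W.neg_mem (ha x hx)
  inv_mem' c hc x hx := by
    rcases eq_or_ne c 0 with rfl | hc0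
    · rw [inv_zero, zero_mul]; exact W.zero_mem
    obtain ⟨y, hy⟩ := Finite.surjective_of_injective
      (f := fun y : W => (⟨c * y, hc y y.2⟩ : W))
      (fun y z h => Subtype.ext (mul_left_cancel₀ hc0 (congrArg Subtype.val h))) ⟨x, hx⟩
    have hxy : c * y = x := congrArg Subtype.val hy
    rw [← hxy, inv_mul_cancel_left₀ hc0]
    exact y.2

theorem units_smul_eq_self_iff (W : AddSubgroup F) (u : Fˣ) :
    u • (W : Set F) = W ↔ (u : F) ∈ W.multiplierField := by
  refine ⟨fun h x hx => ?_, fun h => ?_⟩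
  · rw [← SetLike.mem_coe, ← h]
    exact Set.smul_mem_smul_set hx
  · refine Set.eq_of_subset_of_ncard_le ?_ (Set.ncard_smul_set _ _).ge (Set.toFinite _)
    rintro _ ⟨x, hx, rfl⟩
    exact h x hx

theorem natCard_stabilizer (W : AddSubgroup F) :
    Nat.card (stabilizer Fˣ (W : Set F)) = Nat.card W.multiplierField - 1 := by
  let ι : W.multiplierFieldˣ →* Fˣ := Units.map W.multiplierField.subtype.toMonoidHom
  have hι : Function.Injective ι := Units.map_injective Subtype.val_injective
  have hrange : ι.range = stabilizer Fˣ (W : Set F) := by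
    ext u
    rw [mem_stabilizer_iff, units_smul_eq_self_iff]
    refine ⟨fun ⟨v, hv⟩ => hv ▸ v.1.2, fun hu => ?_⟩
    exact ⟨Units.mk0 ⟨u, hu⟩ fun h => u.ne_zero (congrArg Subtype.val h), Units.ext rfl⟩
  rw [← hrange, ← Nat.card_units, Nat.card_congr (MonoidHom.ofInjective hι).toEquiv]

theorem ncard_orbit_mul_natCard_multiplierField_sub_one (W : AddSubgroup F) :
    (orbit Fˣ (W : Set F)).ncard * (Nat.card W.multiplierField - 1) = Nat.card F - 1 := by
  rw [← index_stabilizer, ← natCard_stabilizer, Subgroup.index_mul_card, Nat.card_units]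

theorem exists_natCard_eq_pow (W : AddSubgroup F) (K : Subfield F)
    (hK : ∀ c ∈ K, ∀ x ∈ W, c * x ∈ W) : ∃ r, Nat.card W = Nat.card K ^ r :=
  ⟨_, Module.natCard_eq_pow_finrank (K := K)
    (V := ({ W with smul_mem' := fun c x hx => hK c c.2 x hx } : Submodule K F))⟩

end AddSubgroup

theorem Set.Finite.ncard_eq_sum_ncard_fiber {α β ι : Type*} {X : Set α} (hX : X.Finite)
    (f : α → β) {D : Finset ι} {g : ι → β} (hg : Set.InjOn g D)
    (hf : ∀ x ∈ X, ∃ d ∈ D, f x = g d) :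
    X.ncard = ∑ d ∈ D, {x ∈ X | f x = g d}.ncard := by
  classical
  have hmaps : ∀ x ∈ hX.toFinset, f x ∈ D.image g := fun x hx => by
    obtain ⟨d, hd, hfx⟩ := hf x (hX.mem_toFinset.1 hx)
    exact hfx ▸ Finset.mem_image_of_mem g hd
  rw [Set.ncard_eq_toFinset_card _ hX, Finset.card_eq_sum_card_fiberwise hmaps,
    Finset.sum_image hg]
  refine Finset.sum_congr rfl fun d _ => ?_
  rw [← Set.ncard_coe_finset]
  congr 1
  ext x
  simp

theorem Set.Finite.ncard_eq_mul_ncard_image_orbit {G α : Type*} [Group G] [MulAction G α]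
    {Y : Set α} (hY : Y.Finite) (hinv : ∀ g : G, ∀ y ∈ Y, g • y ∈ Y) {N : ℕ}
    (hN : ∀ y ∈ Y, (orbit G y).ncard = N) :
    Y.ncard = N * (orbit G '' Y).ncard := by
  have hfiber :
      ∀ O ∈ hY.toFinset.image (orbit G), (hY.toFinset.filter (orbit G · = O)).card = N := by
    simp only [Finset.mem_image, Set.Finite.mem_toFinset]
    rintro _ ⟨y, hy, rfl⟩
    rw [← hN y hy, ← Set.ncard_coe_finset]
    congr 1
    ext z
    simp only [Finset.coe_filter, Set.Finite.mem_toFinset, Set.mem_ofPred_eq, orbit_eq_iff]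
    refine ⟨And.right, fun hz => ⟨?_, hz⟩⟩
    obtain ⟨g, rfl⟩ := hz
    exact hinv g y hy
  rw [Set.ncard_eq_toFinset_card _ hY, Finset.card_eq_sum_card_image (orbit G),
    Finset.sum_congr rfl hfiber, Finset.sum_const, smul_eq_mul, mul_comm, ← Set.ncard_coe_finset,
    Finset.coe_image, hY.coe_toFinset]

theorem Nat.dvd_of_pow_eq_pow_pow {q e m r : ℕ} (hq : 1 < q) (h : q ^ m = (q ^ e) ^ r) :
    e ∣ m :=
  ⟨r, Nat.pow_right_injective hq (h.trans (pow_mul q e r).symm)⟩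

theorem Nat.pow_sub_one_div_injOn {q n : ℕ} (hq : 1 < q) (hn : n ≠ 0) :
    Set.InjOn (fun d => (q ^ n - 1) / (q ^ d - 1)) {d | d ∣ n} := by
  intro d hd e he (hde : (q ^ n - 1) / (q ^ d - 1) = (q ^ n - 1) / (q ^ e - 1))
  have key (d : ℕ) (hd : d ∣ n) : (q ^ n - 1) / (q ^ d - 1) * (q ^ d - 1) = q ^ n - 1 :=
    Nat.div_mul_cancel (Nat.pow_sub_one_dvd_pow_sub_one q hd)
  have hpos : 0 < (q ^ n - 1) / (q ^ d - 1) := Nat.pos_of_ne_zero fun h0 => by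
    have h := key d hd
    have := Nat.one_lt_pow hn hq
    rw [h0, zero_mul] at h
    omega
  have hsub : q ^ d - 1 = q ^ e - 1 :=
    Nat.eq_of_mul_eq_mul_left hpos (by rw [key d hd, hde, key e he])
  have := Nat.one_le_pow d q (by omega)
  have := Nat.one_le_pow e q (by omega)
  exact Nat.pow_right_injective hq (show q ^ d = q ^ e by omega)

theorem pow_pow_eq_self_of_pow_eq_self {M : Type*} [Monoid M] {c : M} {q : ℕ} (h : c ^ q = c) :
    ∀ d : ℕ, c ^ q ^ d = c
  | 0 => pow_one c
  | d + 1 => by rw [pow_succ, pow_mul, pow_pow_eq_self_of_pow_eq_self h d, h]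

section SubspaceSets

variable {F : Type*} [Field F] {q k : ℕ}

theorem subspaceSets_subset_one (d : ℕ) : subspaceSets q d k F ⊆ subspaceSets q 1 k F :=
  fun _ ⟨h0, hadd, hsmul, hcard⟩ =>
    ⟨h0, hadd, fun c x hc => hsmul c x (pow_pow_eq_self_of_pow_eq_self (by simpa using hc) d),
      hcard⟩

theorem units_smul_mem_subspaceSets {d : ℕ} (u : Fˣ) {S : Set F}
    (hS : S ∈ subspaceSets q d k F) : u • S ∈ subspaceSets q d k F := by
  obtain ⟨h0, hadd, hsmul, hcard⟩ := hS
  refine ⟨⟨0, h0, smul_zero u⟩, ?_, ?_, by rwa [Set.ncard_smul_set]⟩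
  · rintro _ ⟨x, hx, rfl⟩ _ ⟨y, hy, rfl⟩
    exact ⟨x + y, hadd x hx y hy, smul_add u x y⟩
  · rintro c _ hc ⟨x, hx, rfl⟩
    exact ⟨c * x, hsmul c x hc hx, mul_left_comm _ _ _⟩

theorem setOf_smul_eq_orbit (S : Set F) :
    {T | ∃ α : F, α ≠ 0 ∧ T = α • S} = orbit Fˣ S := by
  ext T
  constructor
  · rintro ⟨α, hα, rfl⟩
    exact ⟨Units.mk0 α hα, rfl⟩
  · rintro ⟨u, rfl⟩
    exact ⟨u, u.ne_zero, rfl⟩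

theorem ncard_setOf_ncard_orbit_eq [Finite F] (d n : ℕ) :
    {S ∈ subspaceSets q d k F | (orbit Fˣ S).ncard = (q ^ n - 1) / (q ^ d - 1)}.ncard =
      (q ^ n - 1) / (q ^ d - 1) * fullOrbitCount q d n k F := by
  set Y := {S ∈ subspaceSets q d k F | (orbit Fˣ S).ncard = (q ^ n - 1) / (q ^ d - 1)}
  have hinv (u : Fˣ) : ∀ S ∈ Y, u • S ∈ Y := fun S hS =>
    ⟨units_smul_mem_subspaceSets u hS.1, by rw [orbit_smul]; exact hS.2⟩
  rw [(Set.toFinite Y).ncard_eq_mul_ncard_image_orbit hinv fun S hS => hS.2]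
  congr 2
  ext O
  simp only [setOf_smul_eq_orbit, Set.mem_image, Set.mem_ofPred_eq]
  constructor
  · rintro ⟨S, ⟨hS, hO⟩, rfl⟩
    exact ⟨⟨S, hS, rfl⟩, hO⟩
  · rintro ⟨⟨S, hS, rfl⟩, hO⟩
    exact ⟨S, ⟨hS, hO⟩, rfl⟩

variable [Finite F] {K : Subfield F} (hq : 1 < q) (hK : (K : Set F) = {c | c ^ q = c})
  (hKq : Nat.card K = q)
include hq hK hKq

theorem mem_subspaceSets_one_iff {S : Set F} :
    S ∈ subspaceSets q 1 k F ↔ ∃ W : Submodule K F, finrank K W = k ∧ (W : Set F) = S := by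
  have hcard (W : Submodule K F) : (W : Set F).ncard = q ^ finrank K W := by
    rw [← Nat.card_coe_set_eq, ← hKq]
    exact Module.natCard_eq_pow_finrank
  constructor
  · rintro ⟨h0, hadd, hsmul, hS⟩
    let W : Submodule K F :=
      { carrier := S
        add_mem' := fun hx hy => hadd _ hx _ hy
        zero_mem' := h0
        smul_mem' := fun c x hx => hsmul c x (by simpa using (Set.ext_iff.1 hK c).1 c.2) hx }
    exact ⟨W, Nat.pow_right_injective hq ((hcard W).symm.trans hS), rfl⟩
  · rintro ⟨W, hW, rfl⟩
    refine ⟨W.zero_mem, fun x hx y hy => W.add_mem hx hy, fun c x hc hx => ?_, hW ▸ hcard W⟩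
    have hcK : c ∈ K := by rw [← SetLike.mem_coe, hK]; simpa using hc
    exact W.smul_mem ⟨c, hcK⟩ hx

theorem gaussBinom_eq_ncard_subspaceSets_one {n : ℕ} (hF : Nat.card F = q ^ n) (hkn : k ≤ n) :
    gaussBinom q n k = (subspaceSets q 1 k F).ncard := by
  have hKn : finrank K F = n := Nat.pow_right_injective hq <| show q ^ _ = q ^ n by
    rw [← hF, Module.natCard_eq_pow_finrank (K := K), hKq]
  have hsets : subspaceSets q 1 k F = (↑) '' {W : Submodule K F | finrank K W = k} := by
    ext S
    rw [mem_subspaceSets_one_iff hq hK hKq]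
    rfl
  have := Fintype.ofFinite K
  have hgrass := natCard_submodule_finrank_mul_prod (K := K) (V := F) (hKn ▸ hkn)
  rw [← Nat.card_eq_fintype_card, hKq, hKn] at hgrass
  have hpos : 0 < ∏ i ∈ Finset.range k, (q ^ k - q ^ i) := Finset.prod_pos fun i hi =>
    Nat.sub_pos_of_lt (Nat.pow_lt_pow_right hq (Finset.mem_range.1 hi))
  rw [gaussBinom, ← hgrass, Nat.mul_div_cancel _ hpos, hsets,
    Set.ncard_image_of_injective _ SetLike.coe_injective, ← Nat.card_coe_set_eq]
  rfl

theorem exists_mem_subspaceSets_ncard_orbit {n : ℕ} (hF : Nat.card F = q ^ n)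
    {S : Set F} (hS : S ∈ subspaceSets q 1 k F) :
    ∃ e ∈ (n.gcd k).divisors, S ∈ subspaceSets q e k F ∧
      (orbit Fˣ S).ncard = (q ^ n - 1) / (q ^ e - 1) := by
  obtain ⟨W, -, rfl⟩ := (mem_subspaceSets_one_iff hq hK hKq).1 hS
  set L := W.toAddSubgroup.multiplierField
  have hKL : K ≤ L := fun c hc x hx => W.smul_mem ⟨c, hc⟩ hx
  obtain ⟨e, he⟩ : ∃ e, Nat.card L = q ^ e :=
    hKq ▸ L.toAddSubgroup.exists_natCard_eq_pow K fun c hc x hx => L.mul_mem (hKL hc) hx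
  have hen : e ∣ n := Nat.dvd_of_pow_eq_pow_pow (r := finrank L F) hq <| by
    rw [← he, ← hF, Module.natCard_eq_pow_finrank (K := L)]
  have hek : e ∣ k := by
    obtain ⟨r, hr⟩ := W.toAddSubgroup.exists_natCard_eq_pow L fun c hc x hx => hc x hx
    refine Nat.dvd_of_pow_eq_pow_pow (r := r) hq ?_
    rw [← he, ← hr, ← hS.2.2.2]
    exact (Nat.card_coe_set_eq (W : Set F)).symm
  have he0 : e ≠ 0 := by
    rintro rfl
    exact (Finite.one_lt_card (α := L)).ne' (he.trans (pow_zero q))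
  refine ⟨e, Nat.mem_divisors.2 ⟨Nat.dvd_gcd hen hek,
    Nat.gcd_ne_zero_left (ne_zero_of_natCard_eq_pow hF)⟩,
    ⟨hS.1, hS.2.1, fun c x hc hx => ?_, hS.2.2.2⟩, ?_⟩
  · have hcL : c ∈ (L : Set F) := by rw [L.coe_eq_setOf_pow_natCard_eq_self, he]; exact hc
    exact hcL x hx
  · have h := W.toAddSubgroup.ncard_orbit_mul_natCard_multiplierField_sub_one
    rw [he, hF] at h
    exact Nat.eq_div_of_mul_eq_left (by have := Nat.one_lt_pow he0 hq; omega) h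

theorem ncard_subspaceSets_one_eq_sum {n : ℕ} (hF : Nat.card F = q ^ n) :
    (subspaceSets q 1 k F).ncard = ∑ d ∈ (n.gcd k).divisors,
      {S ∈ subspaceSets q d k F | (orbit Fˣ S).ncard = (q ^ n - 1) / (q ^ d - 1)}.ncard := by
  have hinj : Set.InjOn (fun d => (q ^ n - 1) / (q ^ d - 1)) ((n.gcd k).divisors : Set ℕ) :=
    (Nat.pow_sub_one_div_injOn hq (ne_zero_of_natCard_eq_pow hF)).mono fun d hd =>
      (Nat.dvd_of_mem_divisors hd).trans (Nat.gcd_dvd_left n k)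
  rw [(Set.toFinite _).ncard_eq_sum_ncard_fiber (fun S => (orbit Fˣ S).ncard) hinj
    fun S hS => (exists_mem_subspaceSets_ncard_orbit hq hK hKq hF hS).imp
      fun _ ⟨hd, _, h⟩ => ⟨hd, h⟩]
  refine Finset.sum_congr rfl fun d hd => congrArg Set.ncard (Set.ext fun S => ?_)
  refine ⟨fun ⟨hS, hSd⟩ => ⟨?_, hSd⟩,
    fun ⟨hS, hSd⟩ => ⟨subspaceSets_subset_one d hS, hSd⟩⟩
  obtain ⟨e, he, hSe, hSe'⟩ := exists_mem_subspaceSets_ncard_orbit hq hK hKq hF hS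
  rwa [← hinj he hd (hSe'.symm.trans hSd)]

end SubspaceSets

theorem stmt19_general (q n k : ℕ) (hq : 1 < q) (hkn : k < n)
    (F : Type*) [Field F] [Fintype F] (hF : Fintype.card F = q ^ n) :
    gaussBinom q n k =
      ∑ d ∈ (Nat.gcd n k).divisors,
        ((q ^ n - 1) / (q ^ d - 1)) * fullOrbitCount q d n k F := by
  rw [← Nat.card_eq_fintype_card] at hF
  obtain ⟨K, hK, hKq⟩ := exists_subfield_natCard_eq_of_natCard_eq_pow hq hF
  rw [gaussBinom_eq_ncard_subspaceSets_one hq hK hKq hF hkn.le,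
    ncard_subspaceSets_one_eq_sum hq hK hKq hF]
  exact Finset.sum_congr rfl fun d _ => ncard_setOf_ncard_orbit_eq d n

theorem stmt19 (q n k : ℕ) (hq : 1 < q) (hk : 0 < k) (hkn : k < n)
    (F : Type*) [Field F] [Fintype F] (hF : Fintype.card F = q ^ n) :
    gaussBinom q n k =
      ∑ d ∈ (Nat.gcd n k).divisors,
        ((q ^ n - 1) / (q ^ d - 1)) * fullOrbitCount q d n k F :=
  stmt19_general q n k hq hkn F hF
end
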